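/- Let t ≥ 1 and k ≥ t+2 be integers and let n ≥ 2k. Then the family A_t = {A ∈ binom([n],k) : |A ∩ {1,…,t+2}| ≥ t+1} satisfies |I(A_t)| = C(t+2,t) · Σ_{j=0}^{k−t−1} C(n−t−2, j) + C(t+2,t+1) · Σ_{j=0}^{k−t−2} C(n−t−2, j) + Σ_{j=0}^{k−t−3} C(n−t−2, j), where C(a,b) denotes the binomial coefficient a choose b. -/

import Mathlib

open Finset

/-- The collection of distinct intersections `{F ∩ G : F, G ∈ 𝓕, F ≠ G}`. -/
def interFam (F : Finset (Finset ℕ)) : Finset (Finset ℕ) :=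
  ((F ×ˢ F).filter fun p => p.1 ≠ p.2).image fun p => p.1 ∩ p.2

/-- A family is `t`-intersecting if any two members meet in at least `t` elements. -/
def tIntersecting (t : ℕ) (F : Finset (Finset ℕ)) : Prop :=
  ∀ A ∈ F, ∀ B ∈ F, t ≤ (A ∩ B).card

/-- The family `𝓐_t = {A ∈ [n]^(k) : |A ∩ {1,…,t+2}| ≥ t+1}`. -/
def At (n k t : ℕ) : Finset (Finset ℕ) :=
  ((Finset.Icc 1 n).powersetCard k).filter fun A => t + 1 ≤ (A ∩ Finset.Icc 1 (t + 2)).card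

/-- A `t`-intersecting family `F ⊆ [n]^(k)` is saturated if no `k`-set outside `F`
can be added keeping the `t`-intersecting property. -/
def saturated (n k t : ℕ) (F : Finset (Finset ℕ)) : Prop :=
  ∀ G ∈ (Finset.Icc 1 n).powersetCard k, G ∉ F → ¬ tIntersecting t (insert G F)

/-- The family of `t`-transversals `T(F)`. -/
def transv (n k t : ℕ) (F : Finset (Finset ℕ)) : Finset (Finset ℕ) :=
  (Finset.Icc 1 n).powerset.filter fun T => T.card ≤ k ∧ ∀ A ∈ F, t ≤ (T ∩ A).card

/-- The minimal members (under inclusion) of a family. -/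
def minFam (S : Finset (Finset ℕ)) : Finset (Finset ℕ) :=
  S.filter fun B => ∀ B' ∈ S, B' ⊆ B → B' = B

/-!
Two `k`-sets that each miss at most one point of `H = [t+2]` share at least `t` points of `H`,
so every member of `I(𝓐_t)` is a set `S ⊆ [n]` with `|S| < k` and `|S ∩ H| ≥ t`. Conversely,
since `n ≥ 2k`, such an `S` extends to two `k`-sets of `𝓐_t` meeting exactly in `S`: both add
`k - |S|` points outside `S`, disjoint from each other, including `t + 1 - |S ∩ H| ≤ 1` new
points of `H`. Sorting these `S` by `i = |S ∩ H| ∈ {t, t+1, t+2}` leaves `C(t+2, i)` choices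
for `S ∩ H` and `∑_{j < k-i} C(n-t-2, j)` for `S \ H`.
-/

namespace Finset
variable {α : Type*}

theorem card_filter_powerset_card_lt (M : Finset α) (m : ℕ) :
    #{B ∈ M.powerset | #B < m} = ∑ j ∈ range m, (#M).choose j := by
  rw [card_eq_sum_card_fiberwise (f := card) (t := range m)
    fun B hB => mem_range.2 (mem_filter.1 hB).2]
  refine sum_congr rfl fun j hj => ?_
  rw [filter_filter, ← card_powersetCard, powersetCard_eq_filter]
  congr 1
  refine filter_congr fun B _ => ?_
  grind

variable [DecidableEq α]

theorem exists_disjoint_supersets_card_eq {X Y R : Finset α} {d : ℕ} (hXR : X ⊆ R)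
    (hYR : Y ⊆ R) (hXY : Disjoint X Y) (hX : #X ≤ d) (hY : #Y ≤ d) (hR : 2 * d ≤ #R) :
    ∃ P Q, X ⊆ P ∧ Y ⊆ Q ∧ P ⊆ R ∧ Q ⊆ R ∧ Disjoint P Q ∧ #P = d ∧ #Q = d := by
  obtain ⟨P, hXP, hPR, hP⟩ := exists_subsuperset_card_eq (subset_sdiff.2 ⟨hXR, hXY⟩) hX
    (by rw [card_sdiff_of_subset hYR]; omega)
  have hPR' : P ⊆ R := hPR.trans sdiff_subset
  obtain ⟨Q, hYQ, hQR, hQ⟩ := exists_subsuperset_card_eq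
    (subset_sdiff.2 ⟨hYR, ((subset_sdiff.1 hPR).2).symm⟩) hY
    (by rw [card_sdiff_of_subset hPR']; omega)
  exact ⟨P, Q, hXP, hYQ, hPR', hQR.trans sdiff_subset, (disjoint_sdiff.mono_right hQR), hP, hQ⟩

theorem card_inter_lt_of_card_eq_of_ne {F G : Finset α} {k : ℕ} (hF : #F = k) (hG : #G = k)
    (hFG : F ≠ G) : #(F ∩ G) < k := by
  refine ((card_le_card inter_subset_left).trans_eq hF).lt_of_ne fun h => hFG ?_
  exact (eq_of_subset_of_card_le inter_subset_left (by omega)).symm.trans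
    (eq_of_subset_of_card_le inter_subset_right (by omega))

theorem card_inter_add_card_inter_le (F G H : Finset α) :
    #(F ∩ H) + #(G ∩ H) ≤ #H + #(F ∩ G ∩ H) := by
  have hunion : #(F ∩ H ∪ G ∩ H) ≤ #H :=
    card_le_card (union_subset inter_subset_right inter_subset_right)
  have hinter : F ∩ H ∩ (G ∩ H) = F ∩ G ∩ H := by grind
  have := card_union_add_card_inter (F ∩ H) (G ∩ H)
  rw [hinter] at this
  omega

theorem card_filter_powerset_card_inter_eq {U H : Finset α} (hHU : H ⊆ U) (i k : ℕ) :
    #{S ∈ U.powerset | #(S ∩ H) = i ∧ #S < k}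
      = (#H).choose i * ∑ j ∈ range (k - i), (#U - #H).choose j := by
  have : #{S ∈ U.powerset | #(S ∩ H) = i ∧ #S < k}
      = #(H.powersetCard i ×ˢ {B ∈ (U \ H).powerset | #B < k - i}) := by
    refine card_nbij' (fun S => (S ∩ H, S \ H)) (fun p => p.1 ∪ p.2) ?_ ?_ ?_ ?_
    · intro S hS
      simp only [mem_coe, mem_filter, mem_powerset, mem_product, mem_powersetCard] at hS ⊢
      have := card_inter_add_card_sdiff S H
      exact ⟨⟨inter_subset_right, hS.2.1⟩, sdiff_subset_sdiff hS.1 le_rfl, by omega⟩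
    · rintro ⟨A, B⟩ hAB
      simp only [mem_coe, mem_filter, mem_powerset, mem_product, mem_powersetCard] at hAB ⊢
      obtain ⟨⟨hAH, hA⟩, hBUH, hB⟩ := hAB
      have hBH : Disjoint B H := (subset_sdiff.1 hBUH).2
      have hhead : (A ∪ B) ∩ H = A := by grind
      refine ⟨union_subset (hAH.trans hHU) (hBUH.trans sdiff_subset), by rw [hhead, hA], ?_⟩
      rw [card_union_of_disjoint (hBH.symm.mono_left hAH)]
      omega
    · intro S _
      exact (union_comm _ _).trans (sdiff_union_inter S H)
    · rintro ⟨A, B⟩ hAB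
      simp only [mem_coe, mem_filter, mem_powerset, mem_product, mem_powersetCard] at hAB
      obtain ⟨⟨hAH, -⟩, hBUH, -⟩ := hAB
      have hBH : Disjoint B H := (subset_sdiff.1 hBUH).2
      ext : 1 <;> grind
  rw [this, card_product, card_powersetCard, card_filter_powerset_card_lt,
    card_sdiff_of_subset hHU]

theorem card_filter_powerset_le_card_inter {U H : Finset α} (hHU : H ⊆ U) (t k : ℕ) :
    #{S ∈ U.powerset | t ≤ #(S ∩ H) ∧ #S < k}
      = ∑ i ∈ Icc t #H, (#H).choose i * ∑ j ∈ range (k - i), (#U - #H).choose j := by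
  rw [card_eq_sum_card_fiberwise (f := fun S => #(S ∩ H)) (t := Icc t #H)
    fun S hS => mem_Icc.2 ⟨(mem_filter.1 hS).2.1, card_le_card inter_subset_right⟩]
  refine sum_congr rfl fun i hi => ?_
  rw [filter_filter, ← card_filter_powerset_card_inter_eq hHU]
  congr 1
  refine filter_congr fun S _ => ?_
  have := (mem_Icc.1 hi).1
  grind

end Finset

theorem mem_interFam {𝓕 : Finset (Finset ℕ)} {S : Finset ℕ} :
    S ∈ interFam 𝓕 ↔ ∃ F ∈ 𝓕, ∃ G ∈ 𝓕, F ≠ G ∧ F ∩ G = S := by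
  simp [interFam, and_assoc]

theorem mem_interFam_of_union_mem {𝓕 : Finset (Finset ℕ)} {S P Q : Finset ℕ} (hP : S ∪ P ∈ 𝓕)
    (hQ : S ∪ Q ∈ 𝓕) (hPS : Disjoint P S) (hPQ : Disjoint P Q) (hPne : P.Nonempty) :
    S ∈ interFam 𝓕 := by
  refine mem_interFam.2 ⟨S ∪ P, hP, S ∪ Q, hQ, fun h => ?_, ?_⟩
  · obtain ⟨x, hx⟩ := hPne
    rcases mem_union.1 (h ▸ mem_union_right S hx) with hxS | hxQ
    · exact disjoint_left.1 hPS hx hxS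
    · exact disjoint_left.1 hPQ hx hxQ
  · rw [← union_inter_distrib_left, disjoint_iff_inter_eq_empty.1 hPQ, union_empty]

section
variable {U H : Finset ℕ} {k t : ℕ}

theorem le_card_inter_of_mem_interFam {S : Finset ℕ} (hH : #H = t + 2)
    (hS : S ∈ interFam {A ∈ U.powersetCard k | t + 1 ≤ #(A ∩ H)}) :
    S ⊆ U ∧ t ≤ #(S ∩ H) ∧ #S < k := by
  obtain ⟨F, hF, G, hG, hFG, rfl⟩ := mem_interFam.1 hS
  simp only [mem_filter, mem_powersetCard] at hF hG
  have := card_inter_add_card_inter_le F G H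
  exact ⟨inter_subset_left.trans hF.1.1, by omega,
    card_inter_lt_of_card_eq_of_ne hF.1.2 hG.1.2 hFG⟩

theorem union_mem_filter_powersetCard {S Z W : Finset ℕ} (hSU : S ⊆ U) (hZS : Z ⊆ H \ S)
    (hZW : Z ⊆ W) (hWU : W ⊆ U \ S) (hZ : t + 1 ≤ #(S ∩ H) + #Z) (hW : #S + #W = k) :
    S ∪ W ∈ {A ∈ U.powersetCard k | t + 1 ≤ #(A ∩ H)} := by
  have hWS : Disjoint W S := (subset_sdiff.1 hWU).2
  have hhead : S ∩ H ∪ Z ⊆ (S ∪ W) ∩ H :=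
    union_subset (inter_subset_inter_right subset_union_left)
      (subset_inter (hZW.trans subset_union_right) (hZS.trans sdiff_subset))
  have hdisj : Disjoint (S ∩ H) Z := ((subset_sdiff.1 hZS).2.symm).mono_left inter_subset_left
  have := card_le_card hhead
  rw [card_union_of_disjoint hdisj] at this
  simp only [mem_filter, mem_powersetCard]
  refine ⟨⟨union_subset hSU (hWU.trans sdiff_subset), ?_⟩, by omega⟩
  rw [card_union_of_disjoint hWS.symm, hW]

theorem mem_interFam_of_le_card_inter {S : Finset ℕ} (hHU : H ⊆ U) (hH : #H = t + 2)
    (hU : 2 * k ≤ #U) (hSU : S ⊆ U) (hSH : t ≤ #(S ∩ H)) (hSk : #S < k) :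
    S ∈ interFam {A ∈ U.powersetCard k | t + 1 ≤ #(A ∩ H)} := by
  set m := t + 1 - #(S ∩ H)
  have hHS : #(H \ S) = t + 2 - #(S ∩ H) := by rw [card_sdiff, hH]
  obtain ⟨X, Y, -, -, hXH, hYH, hXY, hX, hY⟩ :=
    exists_disjoint_supersets_card_eq (R := H \ S) (d := m) (empty_subset _) (empty_subset _)
      (disjoint_empty_left _) (by simp) (by simp) (by omega)
  have hUS : #(U \ S) = #U - #S := card_sdiff_of_subset hSU
  obtain ⟨P, Q, hXP, hYQ, hPU, hQU, hPQ, hP, hQ⟩ :=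
    exists_disjoint_supersets_card_eq (R := U \ S) (d := k - #S)
      (hXH.trans (sdiff_subset_sdiff hHU le_rfl)) (hYH.trans (sdiff_subset_sdiff hHU le_rfl))
      hXY (by omega) (by omega) (by omega)
  exact mem_interFam_of_union_mem
    (union_mem_filter_powersetCard hSU hXH hXP hPU (by omega) (by omega))
    (union_mem_filter_powersetCard hSU hYH hYQ hQU (by omega) (by omega))
    (subset_sdiff.1 hPU).2 hPQ (card_pos.1 (by omega))

theorem interFam_filter_powersetCard (hHU : H ⊆ U) (hH : #H = t + 2) (hU : 2 * k ≤ #U) :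
    interFam {A ∈ U.powersetCard k | t + 1 ≤ #(A ∩ H)}
      = {S ∈ U.powerset | t ≤ #(S ∩ H) ∧ #S < k} := by
  ext S
  simp only [mem_filter, mem_powerset]
  exact ⟨le_card_inter_of_mem_interFam hH, fun ⟨hSU, hSH, hSk⟩ =>
    mem_interFam_of_le_card_inter hHU hH hU hSU hSH hSk⟩

end

theorem stmt3_general (t k n : ℕ) (hk : t + 2 ≤ k) (hn : 2 * k ≤ n) :
    (interFam (At n k t)).card =
      (t + 2).choose t * ∑ j ∈ Finset.range (k - t), (n - t - 2).choose j
        + (t + 2).choose (t + 1) * ∑ j ∈ Finset.range (k - t - 1), (n - t - 2).choose j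
        + ∑ j ∈ Finset.range (k - t - 2), (n - t - 2).choose j := by
  have hHU : Icc 1 (t + 2) ⊆ Icc 1 n := Icc_subset_Icc_right (by omega)
  have hH : #(Icc 1 (t + 2)) = t + 2 := by simp
  rw [At, interFam_filter_powersetCard hHU hH (by simpa using hn),
    card_filter_powerset_le_card_inter hHU, hH, Nat.card_Icc, sum_Icc_succ_top (by omega),
    sum_Icc_succ_top (by omega), Icc_self, sum_singleton, Nat.choose_self, one_mul]
  simp only [Nat.sub_sub, Nat.add_sub_cancel]

theorem stmt3 (t k n : ℕ) (ht : 1 ≤ t) (hk : t + 2 ≤ k) (hn : 2 * k ≤ n) :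
    (interFam (At n k t)).card =
      (t + 2).choose t * ∑ j ∈ Finset.range (k - t), (n - t - 2).choose j
        + (t + 2).choose (t + 1) * ∑ j ∈ Finset.range (k - t - 1), (n - t - 2).choose j
        + ∑ j ∈ Finset.range (k - t - 2), (n - t - 2).choose j :=
  stmt3_general t k n hk hn
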